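/- Let X, Y, A, B be finite sets and p an NS correlation over (X,Y,A,B). Then p is local if and only if there exist a complex Hilbert space H, a unit vector ξ∈H, and a locally dilatable NS operator matrix (P_{xy,ab}) over (X,Y,A,B) on H such that p(a,b|x,y) = ⟨P_{xy,ab}ξ, ξ⟩ for all x∈X, y∈Y, a∈A, b∈B. -/

import Mathlib

/-!
Local ⇒ dilatable: for `p = ∑ᵢ λᵢ eᵢ fᵢ` take `H = K = ℓ²(Fin n)`, `V = id`, `ξ = (√λᵢ)ᵢ` and the
diagonal POVMs `E_{x,a} = diag (eᵢ(a|x))ᵢ`, `F_{y,b} = diag (fᵢ(b|y))ᵢ`.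

Dilatable ⇒ local (Fine's argument): all `E_{x,a}`, `F_{y,b}` lie in a commutative algebra. There,
for each pair of deterministic strategies `g : X → A`, `h : Y → B`, the product
`∏ₓ E_{x,g x} * ∏_y F_{y,h y}` is positive; these products sum to `1`, and those with `g x = a`,
`h y = b` sum to `E_{x,a} F_{y,b}`. Their expectations in `Vξ` are therefore a probability
distribution on deterministic strategies whose mixture is `p`.
-/

open scoped ComplexOrder

/-- A channel from `V` to `W` : `E v w` stands for `𝓔(w|v)`. -/
def IsChannel {V W : Type*} [Fintype W] (E : V → W → ℝ) : Prop :=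
  (∀ v w, 0 ≤ E v w) ∧ ∀ v, ∑ w, E v w = 1

/-- An NS correlation over `(X, Y, A, B)`: `p x y a b` stands for `p(a,b|x,y)`. -/
def IsNSCorr4 {X Y A B : Type*} [Fintype A] [Fintype B]
    (p : X → Y → A → B → ℝ) : Prop :=
  (∀ x y a b, 0 ≤ p x y a b) ∧
  (∀ x y, ∑ a, ∑ b, p x y a b = 1) ∧
  (∀ x y y' a, ∑ b, p x y a b = ∑ b, p x y' a b) ∧
  (∀ x x' y b, ∑ a, p x y a b = ∑ a, p x' y a b)

/-- A local NS correlation: a finite convex combination of products of channels. -/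
def IsLocalCorr4 {X Y A B : Type*} [Fintype A] [Fintype B]
    (p : X → Y → A → B → ℝ) : Prop :=
  ∃ (n : ℕ) (lam : Fin n → ℝ) (e : Fin n → X → A → ℝ) (f : Fin n → Y → B → ℝ),
    (∀ i, 0 ≤ lam i) ∧ (∑ i, lam i = 1) ∧
    (∀ i, IsChannel (e i)) ∧ (∀ i, IsChannel (f i)) ∧
    ∀ x y a b, p x y a b = ∑ i, lam i * (e i x a * f i y b)

/-- An NS operator matrix over `(X, Y, A, B)` on a Hilbert space `H`. -/
def IsNSOpMat {X Y A B : Type*} [Fintype A] [Fintype B]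
    {H : Type*} [NormedAddCommGroup H] [InnerProductSpace ℂ H]
    (P : X → Y → A → B → (H →L[ℂ] H)) : Prop :=
  (∀ x y a b (η : H), 0 ≤ (inner ℂ ((P x y a b) η) η : ℂ)) ∧
  (∀ x y y' a, ∑ b, P x y a b = ∑ b, P x y' a b) ∧
  (∀ x x' y b, ∑ a, P x y a b = ∑ a, P x' y a b) ∧
  (∀ x y, ∑ a, ∑ b, P x y a b = 1)

/-- A locally dilatable NS operator matrix: `P_{xy,ab} = V* E_{x,a} F_{y,b} V` for an
isometry `V` and POVM's `(E_{x,a})`, `(F_{y,b})` forming a commutative family. -/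
def IsLocallyDilatable {X Y A B : Type*} [Fintype A] [Fintype B]
    {H : Type*} [NormedAddCommGroup H] [InnerProductSpace ℂ H] [CompleteSpace H]
    (P : X → Y → A → B → (H →L[ℂ] H)) : Prop :=
  ∃ (K : Type) (_ : NormedAddCommGroup K) (_ : InnerProductSpace ℂ K) (_ : CompleteSpace K)
    (V : H →L[ℂ] K) (E : X → A → K →L[ℂ] K) (F : Y → B → K →L[ℂ] K),
    (∀ η : H, ‖V η‖ = ‖η‖) ∧
    (∀ x a (η : K), 0 ≤ (inner ℂ ((E x a) η) η : ℂ)) ∧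
    (∀ y b (η : K), 0 ≤ (inner ℂ ((F y b) η) η : ℂ)) ∧
    (∀ x, ∑ a, E x a = 1) ∧ (∀ y, ∑ b, F y b = 1) ∧
    (∀ x a x' a', Commute (E x a) (E x' a')) ∧
    (∀ y b y' b', Commute (F y b) (F y' b')) ∧
    (∀ x a y b, Commute (E x a) (F y b)) ∧
    (∀ x y a b,
      P x y a b = (ContinuousLinearMap.adjoint V) ∘L ((E x a) ∘L ((F y b) ∘L V)))

open scoped InnerProductSpace
open Finset

theorem ContinuousLinearMap.nonneg_iff_inner_nonneg {E : Type*} [NormedAddCommGroup E]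
    [InnerProductSpace ℂ E] (T : E →L[ℂ] E) : 0 ≤ T ↔ ∀ x, 0 ≤ ⟪T x, x⟫_ℂ := by
  rw [nonneg_iff_isPositive, isPositive_iff]
  refine ⟨And.right, fun h => ⟨?_, h⟩⟩
  exact (LinearMap.isSymmetric_iff_inner_map_self_real _).2 fun x =>
    Complex.conj_eq_iff_im.2 (Complex.nonneg_iff.1 (h x)).2.symm

open ContinuousLinearMap in
theorem IsLocallyDilatable.isNSOpMat {X Y A B : Type*} [Fintype A] [Fintype B]
    {H : Type*} [NormedAddCommGroup H] [InnerProductSpace ℂ H] [CompleteSpace H]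
    {P : X → Y → A → B → (H →L[ℂ] H)} (hP : IsLocallyDilatable P) : IsNSOpMat P := by
  obtain ⟨K, _, _, _, V, E, F, hV, hE, hF, hE_sum, hF_sum, -, -, hEF, hP⟩ := hP
  obtain rfl : P = fun x y a b => V.adjoint ∘L (E x a ∘L (F y b ∘L V)) :=
    funext fun x => funext fun y => funext fun a => funext fun b => hP x y a b
  have hsum_b (x y a) :
      ∑ b, V.adjoint ∘L (E x a ∘L (F y b ∘L V)) = V.adjoint ∘L (E x a ∘L V) := by
    simp only [← comp_finsetSum, ← finsetSum_comp, hF_sum]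
    rfl
  have hsum_a (x y b) :
      ∑ a, V.adjoint ∘L (E x a ∘L (F y b ∘L V)) = V.adjoint ∘L (F y b ∘L V) := by
    simp only [← comp_finsetSum, ← finsetSum_comp, hE_sum]
    rfl
  refine ⟨fun x y a b η => ?_, fun x y y' a => by rw [hsum_b, hsum_b],
    fun x x' y b => by rw [hsum_a, hsum_a], fun x y => ?_⟩
  · have hEF_nonneg : 0 ≤ E x a * F y b :=
      (hEF x a y b).mul_nonneg ((nonneg_iff_inner_nonneg _).2 (hE x a))
        ((nonneg_iff_inner_nonneg _).2 (hF y b))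
    rw [comp_apply, adjoint_inner_left]
    exact (nonneg_iff_inner_nonneg _).1 hEF_nonneg (V η)
  · simp only [hsum_b, ← comp_finsetSum, ← finsetSum_comp, hE_sum]
    exact (norm_map_iff_adjoint_comp_self V).1 hV

section Diagonal

variable {ι : Type*} [Fintype ι] [DecidableEq ι]

noncomputable def diagonalOp :
    (ι → ℝ) →ₐ[ℝ] (EuclideanSpace ℂ ι →L[ℂ] EuclideanSpace ℂ ι) :=
  ((Matrix.toEuclideanCLM (n := ι) (𝕜 := ℂ)).toAlgEquiv.toAlgHom.restrictScalars ℝ).comp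
    ((Matrix.diagonalAlgHom ℝ).comp (Complex.ofRealAm.compLeft ι))

theorem inner_diagonalOp_self (d : ι → ℝ) (v : EuclideanSpace ℂ ι) :
    ⟪diagonalOp d v, v⟫_ℂ = ∑ i, ((‖v i‖ ^ 2 * d i : ℝ) : ℂ) := by
  simp [diagonalOp, PiLp.inner_apply, Matrix.mulVec_diagonal, mul_comm (d _ : ℂ), ← mul_assoc,
    Complex.mul_conj, Complex.normSq_eq_norm_sq]

theorem inner_diagonalOp_self_nonneg {d : ι → ℝ} (hd : ∀ i, 0 ≤ d i) (v : EuclideanSpace ℂ ι) :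
    0 ≤ ⟪diagonalOp d v, v⟫_ℂ := by
  rw [inner_diagonalOp_self]
  exact sum_nonneg fun i _ => Complex.zero_le_real.2 (mul_nonneg (sq_nonneg _) (hd i))

theorem sum_diagonalOp_eq_one {V W : Type*} [Fintype W] {c : ι → V → W → ℝ}
    (hc : ∀ i, IsChannel (c i)) (v : V) : ∑ w, diagonalOp (fun i => c i v w) = 1 := by
  rw [← map_sum, ← map_one diagonalOp]
  congr 1
  ext i
  simp [(hc i).2 v]

end Diagonal

theorem IsLocalCorr4.exists_locallyDilatable {X Y A B : Type*} [Fintype A] [Fintype B]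
    {p : X → Y → A → B → ℝ} (hp : IsLocalCorr4 p) :
    ∃ (H : Type) (_ : NormedAddCommGroup H) (_ : InnerProductSpace ℂ H)
      (_ : CompleteSpace H) (ξ : H) (P : X → Y → A → B → (H →L[ℂ] H)),
      ‖ξ‖ = 1 ∧ IsNSOpMat P ∧ IsLocallyDilatable P ∧
      ∀ x y a b, (p x y a b : ℂ) = ⟪P x y a b ξ, ξ⟫_ℂ := by
  obtain ⟨n, lam, e, f, hlam, hlam_sum, he, hf, hp⟩ := hp
  let E x a := diagonalOp fun i => e i x a
  let F y b := diagonalOp fun i => f i y b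
  let ξ : EuclideanSpace ℂ (Fin n) := WithLp.toLp 2 fun i => (√(lam i) : ℂ)
  have hξ (i) : ‖ξ i‖ ^ 2 = lam i := by simp [ξ, Real.sq_sqrt (hlam i)]
  let V := ContinuousLinearMap.id ℂ (EuclideanSpace ℂ (Fin n))
  have hP : IsLocallyDilatable fun x y a b => V.adjoint ∘L (E x a ∘L (F y b ∘L V)) :=
    ⟨_, _, _, _, V, E, F, fun _ => rfl,
      fun x a => inner_diagonalOp_self_nonneg fun i => (he i).1 x a,
      fun y b => inner_diagonalOp_self_nonneg fun i => (hf i).1 y b,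
      sum_diagonalOp_eq_one he, sum_diagonalOp_eq_one hf,
      fun _ _ _ _ => (Commute.all _ _).map diagonalOp,
      fun _ _ _ _ => (Commute.all _ _).map diagonalOp,
      fun _ _ _ _ => (Commute.all _ _).map diagonalOp, fun _ _ _ _ => rfl⟩
  refine ⟨_, _, _, _, ξ, _, ?_, hP.isNSOpMat, hP, fun x y a b => ?_⟩
  · rw [EuclideanSpace.norm_eq]
    simp [hξ, hlam_sum]
  · have hPEF : V.adjoint ∘L (E x a ∘L (F y b ∘L V)) = E x a * F y b := by
      simp [V, ContinuousLinearMap.adjoint_id]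
      rfl
    rw [hPEF, ← map_mul, inner_diagonalOp_self, hp]
    simp [hξ]

section PartitionOfUnity

variable {ι κ R : Type*} [Fintype ι] [DecidableEq ι] [Fintype κ] [CommSemiring R]
  {G : ι → κ → R}

theorem sum_pi_prod_eq_one (hG : ∀ i, ∑ c, G i c = 1) :
    ∑ g : ι → κ, ∏ i, G i (g i) = 1 := by
  simp [← Fintype.prod_sum, hG]

theorem sum_pi_prod_filter_apply_eq [DecidableEq κ] (hG : ∀ i, ∑ c, G i c = 1) (i : ι) (c : κ) :
    ∑ g : ι → κ with g i = c, ∏ j, G j (g j) = G i c := by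
  rw [← Fintype.piFinset_univ (β := fun _ => κ),
    ← Fintype.piFinset_update_singleton_eq_filter_piFinset_eq (fun _ => univ) i (mem_univ c),
    ← prod_univ_sum, Fintype.prod_eq_single i fun j hj => by simp [Function.update_of_ne hj, hG]]
  simp

end PartitionOfUnity

section LocalModels

variable {X Y A B : Type*} [Fintype A] [Fintype B]

theorem isLocalCorr4_of_fintype {ι : Type*} [Fintype ι] (lam : ι → ℝ) (e : ι → X → A → ℝ)
    (f : ι → Y → B → ℝ) (hlam : ∀ i, 0 ≤ lam i) (hlam_sum : ∑ i, lam i = 1)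
    (he : ∀ i, IsChannel (e i)) (hf : ∀ i, IsChannel (f i)) :
    IsLocalCorr4 fun x y a b => ∑ i, lam i * (e i x a * f i y b) := by
  let σ := (Fintype.equivFin ι).symm
  refine ⟨Fintype.card ι, lam ∘ σ, e ∘ σ, f ∘ σ, fun i => hlam _, ?_, fun i => he _,
    fun i => hf _, fun x y a b => ?_⟩
  · rw [← hlam_sum]
    exact σ.sum_comp lam
  · exact (σ.sum_comp fun i => lam i * (e i x a * f i y b)).symm

theorem isChannel_deterministic [DecidableEq A] (g : X → A) :
    IsChannel fun x a => if g x = a then (1 : ℝ) else 0 :=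
  ⟨fun x a => by positivity, fun x => by simp⟩

theorem isLocalCorr4_of_deterministic [Fintype X] [DecidableEq X] [Fintype Y] [DecidableEq Y]
    [DecidableEq A] [DecidableEq B] (μ : (X → A) × (Y → B) → ℝ) (hμ : ∀ w, 0 ≤ μ w)
    (hμ_sum : ∑ w, μ w = 1) :
    IsLocalCorr4 fun x y a b => ∑ w with w.1 x = a ∧ w.2 y = b, μ w := by
  convert isLocalCorr4_of_fintype μ _ _ hμ hμ_sum (fun w => isChannel_deterministic w.1)
    (fun w => isChannel_deterministic w.2) using 1
  ext x y a b
  simp only [sum_filter, mul_ite, mul_one, mul_zero, ← ite_and, and_comm]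

end LocalModels

section CommutingPOVMs

variable {X Y A B : Type*} [Fintype X] [DecidableEq X] [Fintype Y] [DecidableEq Y]
  [Fintype A] [DecidableEq A] [Fintype B] [DecidableEq B]
  {K : Type*} [NormedAddCommGroup K] [InnerProductSpace ℂ K] [CompleteSpace K]

theorem isLocalCorr4_of_commSemiring {R : Type*} [CommSemiring R] (φ : R →+* (K →L[ℂ] K))
    {E : X → A → R} {F : Y → B → R} (hE : ∀ x a, 0 ≤ φ (E x a)) (hF : ∀ y b, 0 ≤ φ (F y b))
    (hE_sum : ∀ x, ∑ a, E x a = 1) (hF_sum : ∀ y, ∑ b, F y b = 1) {η : K} (hη : ‖η‖ = 1) :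
    IsLocalCorr4 fun x y a b => (⟪φ (E x a * F y b) η, η⟫_ℂ).re := by
  have hmul (m n : R) (hm : 0 ≤ φ m) (hn : 0 ≤ φ n) : 0 ≤ φ (m * n) := by
    rw [map_mul]
    exact ((Commute.all m n).map φ).mul_nonneg hm hn
  let T : (X → A) × (Y → B) → R := fun w => (∏ x, E x (w.1 x)) * ∏ y, F y (w.2 y)
  have hT_nonneg (w) : 0 ≤ φ (T w) :=
    hmul _ _ (prod_induction _ _ hmul (by simp) fun x _ => hE x _)
      (prod_induction _ _ hmul (by simp) fun y _ => hF y _)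
  have hT_sum : ∑ w, T w = 1 := by
    simp only [T, Fintype.sum_prod_type]
    rw [← sum_mul_sum, sum_pi_prod_eq_one hE_sum, sum_pi_prod_eq_one hF_sum, one_mul]
  have hT_marginal (x y a b) : ∑ w with w.1 x = a ∧ w.2 y = b, T w = E x a * F y b := by
    rw [← univ_product_univ, filter_product (fun g : X → A => g x = a) (fun h : Y → B => h y = b),
      sum_product]
    simp only [T]
    rw [← sum_mul_sum, sum_pi_prod_filter_apply_eq hE_sum, sum_pi_prod_filter_apply_eq hF_sum]
  let μ w := (⟪φ (T w) η, η⟫_ℂ).re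
  have hμ_sum (s : Finset ((X → A) × (Y → B))) :
      ∑ w ∈ s, μ w = (⟪φ (∑ w ∈ s, T w) η, η⟫_ℂ).re := by
    simp [μ, map_sum]
  have hμ_nonneg (w) : 0 ≤ μ w :=
    ((ContinuousLinearMap.nonneg_iff_isPositive _).1 (hT_nonneg w)).re_inner_nonneg_left η
  convert isLocalCorr4_of_deterministic μ hμ_nonneg
    (by rw [hμ_sum, hT_sum, map_one]; simp [hη]) using 1
  ext x y a b
  rw [hμ_sum, hT_marginal]

open scoped IsMulCommutative in
theorem isLocalCorr4_of_commute {E : X → A → K →L[ℂ] K} {F : Y → B → K →L[ℂ] K}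
    (hE : ∀ x a, 0 ≤ E x a) (hF : ∀ y b, 0 ≤ F y b)
    (hE_sum : ∀ x, ∑ a, E x a = 1) (hF_sum : ∀ y, ∑ b, F y b = 1)
    (hEE : ∀ x a x' a', Commute (E x a) (E x' a')) (hFF : ∀ y b y' b', Commute (F y b) (F y' b'))
    (hEF : ∀ x a y b, Commute (E x a) (F y b)) {η : K} (hη : ‖η‖ = 1) :
    IsLocalCorr4 fun x y a b => (⟪E x a (F y b η), η⟫_ℂ).re := by
  let S : Set (K →L[ℂ] K) := Set.range (Function.uncurry E) ∪ Set.range (Function.uncurry F)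
  have hS : ∀ u ∈ S, ∀ v ∈ S, u * v = v * u := by
    rintro _ (⟨⟨x, a⟩, rfl⟩ | ⟨⟨y, b⟩, rfl⟩) _ (⟨⟨x', a'⟩, rfl⟩ | ⟨⟨y', b'⟩, rfl⟩)
    exacts [(hEE x a x' a').eq, (hEF x a y' b').eq, (hEF x' a' y b).eq.symm, (hFF y b y' b').eq]
  -- a `CommSemiring` structure on the adjoined algebra, via the scoped instance
  have := Algebra.isMulCommutative_adjoin ℂ hS
  let E' x a : Algebra.adjoin ℂ S := ⟨E x a, Algebra.subset_adjoin (.inl ⟨(x, a), rfl⟩)⟩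
  let F' y b : Algebra.adjoin ℂ S := ⟨F y b, Algebra.subset_adjoin (.inr ⟨(y, b), rfl⟩)⟩
  exact isLocalCorr4_of_commSemiring (Algebra.adjoin ℂ S).val.toRingHom (E := E') (F := F') hE hF
    (fun x => Subtype.ext (by simpa using hE_sum x))
    (fun y => Subtype.ext (by simpa using hF_sum y)) hη

end CommutingPOVMs

theorem local_iff_locallyDilatable_general {X Y A B : Type*}
    [Fintype X] [Fintype Y] [Fintype A] [Fintype B]
    (p : X → Y → A → B → ℝ) :
    IsLocalCorr4 p ↔
      ∃ (H : Type) (_ : NormedAddCommGroup H) (_ : InnerProductSpace ℂ H)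
        (_ : CompleteSpace H) (ξ : H) (P : X → Y → A → B → (H →L[ℂ] H)),
        ‖ξ‖ = 1 ∧ IsNSOpMat P ∧ IsLocallyDilatable P ∧
        ∀ x y a b, (p x y a b : ℂ) = inner ℂ ((P x y a b) ξ) ξ := by
  classical
  refine ⟨IsLocalCorr4.exists_locallyDilatable, ?_⟩
  rintro ⟨H, _, _, _, ξ, P, hξ, -, ⟨K, _, _, _, V, E, F, hV, hE, hF, hE_sum, hF_sum, hEE, hFF, hEF,
    hP⟩, hpP⟩
  obtain rfl : p = fun x y a b => (⟪E x a (F y b (V ξ)), V ξ⟫_ℂ).re := by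
    ext x y a b
    rw [← Complex.ofReal_re (p x y a b), hpP, hP, ContinuousLinearMap.comp_apply,
      ContinuousLinearMap.adjoint_inner_left]
    rfl
  exact isLocalCorr4_of_commute (fun x a => (E x a).nonneg_iff_inner_nonneg.2 (hE x a))
    (fun y b => (F y b).nonneg_iff_inner_nonneg.2 (hF y b)) hE_sum hF_sum hEE hFF hEF
    (by rw [hV, hξ])

/-- An NS correlation is local iff it arises from a locally dilatable NS operator matrix
and a unit vector. -/
theorem local_iff_locallyDilatable {X Y A B : Type*}
    [Fintype X] [Fintype Y] [Fintype A] [Fintype B]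
    (p : X → Y → A → B → ℝ) (hp : IsNSCorr4 p) :
    IsLocalCorr4 p ↔
      ∃ (H : Type) (_ : NormedAddCommGroup H) (_ : InnerProductSpace ℂ H)
        (_ : CompleteSpace H) (ξ : H) (P : X → Y → A → B → (H →L[ℂ] H)),
        ‖ξ‖ = 1 ∧ IsNSOpMat P ∧ IsLocallyDilatable P ∧
        ∀ x y a b, (p x y a b : ℂ) = inner ℂ ((P x y a b) ξ) ξ :=
  local_iff_locallyDilatable_general p
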